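/- arXiv:2207.13312 — 3 statements merged into one kernel-verified Lean document; each statement's English description precedes it below -/
import Mathlib

section
/- For every integer d ≥ 3 there exists n₀ such that for all n ≥ n₀ the following holds: there exists a choice of signs z_γ ∈ {−1,+1}, one for each γ ∈ 𝔽₂ⁿ with ‖γ‖₁ = d, such that the function f : 𝔽₂ⁿ → [-1,1] defined by f(x) = binom(n,d)^{-1} · Σ_{‖γ‖₁ = d} z_γ · (-1)^{⟨γ,x⟩} satisfies: for every affine subspace 𝒰 of 𝔽₂ⁿ of dimension at least 2d · n^{1/(d−1)}, the restriction f_𝒰 has a nonzero Fourier coefficient of magnitude at least binom(n,d)^{-1}. In particular, for every δ < binom(n,d)^{-1}, f_𝒰 is not δ-regular on any affine subspace of dimension at least 2d · n^{1/(d−1)}. -/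
/-!
By orthogonality of characters, the coefficient of `f_𝒰` at `γ ∈ 𝒲` is `binom(n,d)⁻¹` times the
signed sum `∑ z_β (-1)^⟨β,α⟩` over the weight-`d` vectors `β` of the coset `γ + 𝒱^⊥`; this sum is
an integer, so it suffices to choose the signs so that, for every `𝒱` of dimension at least
`k = ⌈2d·n^{1/(d-1)}⌉` and every `α`, some nonzero coset of `𝒱^⊥` has a nonvanishing signed sum.

Pick `k` independent vectors `A` of `𝒱` and `k` pivot coordinates on which they stay independent;
the indicator vectors of the `d`-subsets of the pivots lie in `binom(k,d)` distinct nonzero cosets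
of `span(A)^⊥ ⊇ 𝒱^⊥`. For fixed `(A, α)`, a random sign pattern makes all these coset sums vanish
with probability at most `2^{-binom(k,d)}`, while there are only `2^{nk+n} < 2^{binom(k,d)}`
pairs `(A, α)`. A surviving sign pattern has a nonzero sum over some nonzero coset of `span(A)^⊥`, hence
over one of the cosets of `𝒱^⊥` into which it splits.
-/

open Finset

abbrev F2 (n : ℕ) := Fin n → ZMod 2

/-- The 𝔽₂ bilinear form ⟨γ,x⟩ = Σᵢ γᵢ xᵢ. -/
def ip {n : ℕ} (γ x : F2 n) : ZMod 2 := ∑ i, γ i * x i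

/-- The character χ_γ(x) = (-1)^⟨γ,x⟩. -/
noncomputable def chi {n : ℕ} (γ x : F2 n) : ℝ := (-1 : ℝ) ^ (ip γ x).val

/-- Fourier coefficient f̂(γ) = 2^{-n} Σ_x f(x) (-1)^⟨γ,x⟩. -/
noncomputable def fCoeff {n : ℕ} (f : F2 n → ℝ) (γ : F2 n) : ℝ :=
  (∑ x : F2 n, f x * chi γ x) / 2 ^ n

/-- f has Fourier degree at most d. -/
def HasFourierDegLE {n : ℕ} (f : F2 n → ℝ) (d : ℕ) : Prop :=
  ∀ γ : F2 n, d < hammingNorm γ → fCoeff f γ = 0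

/-- Orthogonal subspace 𝒱^⊥. -/
def perp {n : ℕ} (V : Submodule (ZMod 2) (F2 n)) : Submodule (ZMod 2) (F2 n) where
  carrier := {γ | ∀ v ∈ V, ip γ v = 0}
  zero_mem' := by
    intro v _
    simp [ip]
  add_mem' := by
    intro a b ha hb v hv
    have h : ip (a + b) v = ip a v + ip b v := by
      simp [ip, add_mul, Finset.sum_add_distrib]
    simp only [Set.mem_setOf_eq] at ha hb ⊢
    rw [h, ha v hv, hb v hv, add_zero]
  smul_mem' := by
    intro c a ha v hv
    have h : ip (c • a) v = c * ip a v := by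
      simp [ip, Finset.mul_sum, mul_assoc]
    simp only [Set.mem_setOf_eq] at ha ⊢
    rw [h, ha v hv, mul_zero]

/-- Fourier coefficient of the restriction of f to the affine subspace α + 𝒱,
indexed by γ (from a complement 𝒲 of 𝒱^⊥):
f̂_𝒰(γ) = |𝒱|⁻¹ Σ_{x ∈ 𝒱} f(x+α)(-1)^⟨γ,x⟩. -/
noncomputable def restrictCoeff {n : ℕ} (f : F2 n → ℝ) (V : Submodule (ZMod 2) (F2 n))
    (α γ : F2 n) : ℝ :=
  (∑ x : F2 n, Set.indicator (V : Set (F2 n)) (fun x => f (x + α) * chi γ x) x) / (Nat.card V)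

/-- The restriction of f to α + 𝒱 is δ-regular. -/
def IsDeltaRegular {n : ℕ} (f : F2 n → ℝ) (V : Submodule (ZMod 2) (F2 n)) (α : F2 n)
    (δ : ℝ) : Prop :=
  ∀ W : Submodule (ZMod 2) (F2 n), IsCompl W (perp V) →
    ∀ γ ∈ W, γ ≠ 0 → |restrictCoeff f V α γ| ≤ δ

/-- span of the standard basis vectors indexed by J. -/
def spanJ {n : ℕ} (J : Finset (Fin n)) : Submodule (ZMod 2) (F2 n) where
  carrier := {x | ∀ i ∉ J, x i = 0}
  zero_mem' := by intro i _; rfl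
  add_mem' := by
    intro a b ha hb i hi
    simp only [Set.mem_setOf_eq] at ha hb ⊢
    simp [Pi.add_apply, ha i hi, hb i hi]
  smul_mem' := by
    intro c a ha i hi
    simp only [Set.mem_setOf_eq] at ha ⊢
    simp [Pi.smul_apply, ha i hi]

open scoped Classical

section Characters

variable {n : ℕ}

lemma ip_eq_dotProduct (γ x : F2 n) : ip γ x = γ ⬝ᵥ x := rfl

lemma neg_one_pow_val_add (a b : ZMod 2) :
    (-1 : ℝ) ^ (a + b).val = (-1) ^ a.val * (-1) ^ b.val := by
  rw [ZMod.val_add, ← neg_one_pow_eq_pow_mod_two, pow_add]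

lemma chi_add_right (γ x y : F2 n) : chi γ (x + y) = chi γ x * chi γ y := by
  rw [chi, ip_eq_dotProduct, dotProduct_add, neg_one_pow_val_add]; rfl

lemma chi_comm (γ x : F2 n) : chi γ x = chi x γ := by
  rw [chi, chi, ip_eq_dotProduct, ip_eq_dotProduct, dotProduct_comm]

lemma chi_add_left (γ γ' x : F2 n) : chi (γ + γ') x = chi γ x * chi γ' x := by
  rw [chi_comm, chi_add_right, chi_comm x, chi_comm x]

lemma chi_eq_one_or_eq_neg_one (γ x : F2 n) : chi γ x = 1 ∨ chi γ x = -1 :=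
  neg_one_pow_eq_or ℝ _

lemma chi_ne_zero (γ x : F2 n) : chi γ x ≠ 0 := by
  rcases chi_eq_one_or_eq_neg_one γ x with h | h <;> rw [h] <;> norm_num

lemma chi_eq_one_iff {γ x : F2 n} : chi γ x = 1 ↔ ip γ x = 0 := by
  rw [chi, neg_one_pow_eq_one_iff_even (by norm_num), ← ZMod.natCast_eq_zero_iff_even,
    ZMod.natCast_zmod_val]

lemma sum_chi_submodule (V : Submodule (ZMod 2) (F2 n)) (μ : F2 n) :
    ∑ x : V, chi μ x = if μ ∈ perp V then (Nat.card V : ℝ) else 0 := by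
  split_ifs with hμ
  · simp [chi_eq_one_iff.2 (hμ _ (Subtype.prop _)), Nat.card_eq_fintype_card]
  · obtain ⟨v, hv, hμv⟩ : ∃ v ∈ V, ip μ v ≠ 0 := by simpa [perp] using hμ
    have hv_ne : chi μ v ≠ 1 := mt chi_eq_one_iff.1 hμv
    refine eq_zero_of_mul_eq_self_left hv_ne ?_
    rw [Finset.mul_sum]
    exact Fintype.sum_equiv (Equiv.addLeft ⟨v, hv⟩) _ _ fun x => by
      rw [Equiv.coe_addLeft, Submodule.coe_add, chi_add_right]

end Characters

lemma Submodule.mkQ_eq_mkQ_iff_add_mem {G : Type*} [AddCommGroup G] [Module (ZMod 2) G]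
    (U : Submodule (ZMod 2) G) (x y : G) : U.mkQ x = U.mkQ y ↔ x + y ∈ U := by
  rw [Submodule.mkQ_apply, Submodule.mkQ_apply, Submodule.Quotient.eq, ZModModule.sub_eq_add]

theorem exists_sum_fiber_ne_zero_of_le {R E : Type*} [Ring R] [AddCommGroup E] [Module R E]
    {U U' : Submodule R E} (hU : U ≤ U') (s : Finset E) (g : E → ℝ) {c' : E ⧸ U'}
    (hc' : c' ≠ 0) (h : ∑ x ∈ s with U'.mkQ x = c', g x ≠ 0) :
    ∃ c : E ⧸ U, c ≠ 0 ∧ ∑ x ∈ s with U.mkQ x = c, g x ≠ 0 := by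
  rw [← sum_fiberwise_of_maps_to fun x hx => mem_image_of_mem U.mkQ hx] at h
  obtain ⟨c, hc, hne⟩ := exists_ne_zero_of_sum_ne_zero h
  obtain ⟨x₀, hx₀, rfl⟩ := mem_image.1 hc
  have hfactor : ∀ x, U.mkQ x = U.mkQ x₀ → U'.mkQ x = c' := fun x hx => by
    rw [← Submodule.factor_mk hU, hx, Submodule.factor_mk, (mem_filter.1 hx₀).2]
  refine ⟨U.mkQ x₀, fun h0 => hc' ?_, ?_⟩
  · rw [← hfactor 0 (by rw [map_zero, h0]), map_zero]
  · rwa [filter_filter, filter_congr fun x _ => and_iff_right_of_imp (hfactor x)] at hne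

section RestrictCoeff

variable {n : ℕ}

lemma restrictCoeff_eq_sum_subtype (f : F2 n → ℝ) (V : Submodule (ZMod 2) (F2 n)) (α γ : F2 n) :
    restrictCoeff f V α γ = (∑ x : V, f (x + α) * chi γ x) / Nat.card V := by
  rw [restrictCoeff]
  congr 1
  rw [← Finset.sum_subtype (Finset.univ.filter (· ∈ V)) (by simp) fun x => f (x + α) * chi γ x,
    Finset.sum_filter]
  simp [Set.indicator_apply]

theorem restrictCoeff_mul_sum_chi (a : ℝ) (s : Finset (F2 n)) (z : F2 n → ℝ)
    (V : Submodule (ZMod 2) (F2 n)) (α γ : F2 n) :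
    restrictCoeff (fun x => a * ∑ β ∈ s, z β * chi β x) V α γ =
      a * ∑ β ∈ s with (perp V).mkQ β = (perp V).mkQ γ, z β * chi β α := by
  have hexpand : ∀ x : V, (a * ∑ β ∈ s, z β * chi β (x + α)) * chi γ x =
      a * ∑ β ∈ s, z β * chi β α * chi (β + γ) x := fun x => by
    rw [mul_assoc, Finset.sum_mul]
    congr 1
    refine Finset.sum_congr rfl fun β _ => ?_
    rw [chi_add_right, chi_add_left]; ring
  simp_rw [restrictCoeff_eq_sum_subtype, hexpand, ← Finset.mul_sum, Finset.sum_comm (γ := V),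
    ← Finset.mul_sum, sum_chi_submodule, Finset.sum_filter, Submodule.mkQ_eq_mkQ_iff_add_mem]
  rw [mul_div_assoc, Finset.sum_div]
  congr 2 with β
  split_ifs <;> simp

end RestrictCoeff

/-- `I` indexes `r` linearly independent columns of the rank-`r` matrix with rows `A`. -/
theorem exists_pivots {K ι : Type*} [Field K] [Fintype ι] (V : Submodule K (ι → K)) {r : ℕ}
    (hr : r ≤ Module.finrank K V) :
    ∃ (A : Fin r → ι → K) (I : Finset ι), (∀ j, A j ∈ V) ∧ #I = r ∧
      ∀ w : ι → K, (∀ i ∉ I, w i = 0) → (∀ j, w ⬝ᵥ A j = 0) → w = 0 := by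
  obtain ⟨A', hA'⟩ := exists_linearIndependent_of_le_finrank hr
  set A : Fin r → ι → K := fun j => A' j
  have hA : LinearIndependent K A := hA'.map' V.subtype V.ker_subtype
  obtain ⟨κ, a, ha, hspan, hcols⟩ := exists_linearIndependent' K (Matrix.of A).col
  have : Fintype κ := Fintype.ofInjective a ha
  have hκ : Fintype.card κ = r := by
    rw [← finrank_span_eq_card hcols, hspan, ← Matrix.rank_eq_finrank_span_cols,
      Matrix.rank_eq_finrank_span_row]
    exact (finrank_span_eq_card hA).trans (Fintype.card_fin r)
  set I := Finset.univ.map ⟨a, ha⟩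
  refine ⟨A, I, fun j => (A' j).2, by simp [I, hκ], fun w hw hwA => ?_⟩
  have hcomb : ∑ k, w (a k) • (Matrix.of A).col (a k) = 0 := by
    ext j
    simp only [Finset.sum_apply, Pi.smul_apply, smul_eq_mul, Matrix.col_apply, Matrix.of_apply,
      Pi.zero_apply]
    rw [← hwA j, dotProduct, ← Finset.sum_subset (Finset.subset_univ I), Finset.sum_map]
    · rfl
    · intro i _ hi
      rw [hw i hi, zero_mul]
  have hzero := Fintype.linearIndependent_iff.1 hcols _ hcomb
  funext i
  by_cases hi : i ∈ I
  · obtain ⟨k, -, rfl⟩ := Finset.mem_map.1 hi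
    exact hzero k
  · exact hw i hi

section SphereClasses

variable {n : ℕ}

lemma mem_perp_span_iff {S : Set (F2 n)} {γ : F2 n} :
    γ ∈ perp (Submodule.span (ZMod 2) S) ↔ ∀ v ∈ S, ip γ v = 0 := by
  refine ⟨fun h v hv => h v (Submodule.subset_span hv), fun h v hv => ?_⟩
  induction hv using Submodule.span_induction with
  | mem v hv => exact h v hv
  | zero => simp [ip_eq_dotProduct]
  | add x y _ _ hx hy =>
    rw [ip_eq_dotProduct] at hx hy ⊢
    rw [dotProduct_add, hx, hy, add_zero]
  | smul c x _ hx =>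
    rw [ip_eq_dotProduct] at hx ⊢
    rw [dotProduct_smul, hx, smul_zero]

lemma perp_le_perp_span_of_subset {V : Submodule (ZMod 2) (F2 n)} {S : Set (F2 n)}
    (hS : S ⊆ V) : perp V ≤ perp (Submodule.span (ZMod 2) S) :=
  fun _ hγ => mem_perp_span_iff.2 fun v hv => hγ v (hS hv)

def weightSphere (n d : ℕ) : Finset (F2 n) := {γ | hammingNorm γ = d}

noncomputable def sphereClasses (U : Submodule (ZMod 2) (F2 n)) (d : ℕ) : Finset (F2 n ⧸ U) :=
  ((weightSphere n d).image U.mkQ).erase 0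

lemma hammingNorm_indicator (J : Finset (Fin n)) :
    hammingNorm (fun i => if i ∈ J then (1 : ZMod 2) else 0) = J.card := by
  simp [hammingNorm]

/-- The indicator vectors of the `d`-subsets of the pivot coordinates lie in pairwise distinct
nonzero classes. -/
theorem exists_choose_le_card_sphereClasses (V : Submodule (ZMod 2) (F2 n)) {k d : ℕ}
    (hk : k ≤ Module.finrank (ZMod 2) V) (hd : d ≠ 0) :
    ∃ A : Fin k → F2 n, (∀ j, A j ∈ V) ∧
      k.choose d ≤ #(sphereClasses (perp (Submodule.span (ZMod 2) (Set.range A))) d) := by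
  obtain ⟨A, I, hAV, hI, hpivot⟩ := exists_pivots V hk
  refine ⟨A, hAV, ?_⟩
  set P := perp (Submodule.span (ZMod 2) (Set.range A))
  have hinj : ∀ x ∈ spanJ I, ∀ y ∈ spanJ I, P.mkQ x = P.mkQ y → x = y := by
    intro x hx y hy hxy
    rw [Submodule.mkQ_eq_mkQ_iff_add_mem, mem_perp_span_iff] at hxy
    have hsum := hpivot (x + y) ((spanJ I).add_mem hx hy) fun j => hxy _ ⟨j, rfl⟩
    rwa [← ZModModule.sub_eq_add, sub_eq_zero] at hsum
  set ind : Finset (Fin n) → F2 n := fun J i => if i ∈ J then 1 else 0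
  have hind_mem : ∀ J ∈ I.powersetCard d, ind J ∈ spanJ I := fun J hJ i hi => by
    simp only [ind, ite_eq_right_iff, one_ne_zero]
    exact fun hiJ => hi ((mem_powersetCard.1 hJ).1 hiJ)
  have hind_inj : Set.InjOn (P.mkQ ∘ ind) (I.powersetCard d) := fun J hJ J' hJ' h => by
    ext i
    have := congrFun (hinj _ (hind_mem J hJ) _ (hind_mem J' hJ') h) i
    by_cases hiJ : i ∈ J <;> by_cases hiJ' : i ∈ J' <;> simp_all [ind]
  calc k.choose d = #(I.powersetCard d) := by rw [card_powersetCard, hI]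
    _ = #((I.powersetCard d).image (P.mkQ ∘ ind)) := (card_image_of_injOn hind_inj).symm
    _ ≤ #(sphereClasses P d) := by
      refine card_le_card fun c hc => ?_
      obtain ⟨J, hJ, rfl⟩ := mem_image.1 hc
      have hJd := (mem_powersetCard.1 hJ).2
      refine mem_erase.2 ⟨fun h0 => hd ?_, mem_image.2 ⟨ind J, ?_, rfl⟩⟩
      · rw [← map_zero P.mkQ] at h0
        have := hinj _ (hind_mem J hJ) 0 (spanJ I).zero_mem h0
        rw [← hJd, card_eq_zero]
        ext i
        simpa [ind] using congrFun this i
      · simp only [weightSphere, mem_filter, mem_univ, true_and, ind, hammingNorm_indicator, hJd]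

end SphereClasses

section SignPatterns

variable {n : ℕ}

noncomputable def signs (X : Type*) [Fintype X] [DecidableEq X] : Finset (X → ℝ) :=
  Fintype.piFinset fun _ => {1, -1}

lemma card_signs (X : Type*) [Fintype X] [DecidableEq X] :
    #(signs X) = 2 ^ Fintype.card X := by
  simp [signs, Fintype.card_piFinset, card_pair (show (1 : ℝ) ≠ -1 by norm_num)]

lemma mem_signs {X : Type*} [Fintype X] [DecidableEq X] {z : X → ℝ} :
    z ∈ signs X ↔ ∀ x, z x = 1 ∨ z x = -1 := by
  simp [signs]

/-- Each sign pattern killing all the fibre sums over `C` is determined by its values off a set of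
representatives of `C`. -/
theorem card_filter_fiber_sums_eq_zero_mul_le {X Q : Type*} [Fintype X] [DecidableEq X]
    [DecidableEq Q] (g : X → Q) (s : Finset X) (w : X → ℝ) (hw : ∀ x, w x ≠ 0)
    (C : Finset Q) (hC : C ⊆ s.image g) :
    #{z ∈ signs X | ∀ c ∈ C, ∑ x ∈ s with g x = c, z x * w x = 0} * 2 ^ #C ≤
      2 ^ Fintype.card X := by
  have hrep : ∀ c : C, ∃ x ∈ s, g x = c := fun c => mem_image.1 (hC c.2)
  choose r hrs hgr using hrep
  have hr : Function.Injective r := fun c c' h => Subtype.ext <| by rw [← hgr c, ← hgr c', h]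
  set R := univ.image r
  have hR : #R = #C := by rw [card_image_of_injective _ hr, card_univ, Fintype.card_coe]
  have hRX : #R ≤ Fintype.card X := card_le_univ R
  set Bad : Finset (X → ℝ) := {z ∈ signs X | ∀ c ∈ C, ∑ x ∈ s with g x = c, z x * w x = 0}
  let restrict : (X → ℝ) → ({x // x ∉ R} → ℝ) := fun z x => z x
  have hmaps : ∀ z ∈ Bad, restrict z ∈ signs {x // x ∉ R} := fun z hz =>
    mem_signs.2 fun x => mem_signs.1 (mem_filter.1 hz).1 x
  have hinj : Set.InjOn restrict Bad := by
    intro z hz z' hz' hzz'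
    have hoff : ∀ x ∉ R, z x = z' x := fun x hx => congrFun hzz' ⟨x, hx⟩
    funext x
    by_cases hx : x ∈ R
    swap
    · exact hoff x hx
    obtain ⟨c, -, rfl⟩ := mem_image.1 hx
    have hdiff : ∑ y ∈ s with g y = c, (z y - z' y) * w y = 0 := by
      simp only [sub_mul, sum_sub_distrib, (mem_filter.1 hz).2 c c.2,
        (mem_filter.1 hz').2 c c.2, sub_self]
    rw [sum_eq_single_of_mem (r c) (mem_filter.2 ⟨hrs c, hgr c⟩)] at hdiff
    · exact sub_eq_zero.1 ((mul_eq_zero.1 hdiff).resolve_right (hw _))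
    · intro y hy hyr
      have hyR : y ∉ R := fun hyR => by
        obtain ⟨c', -, rfl⟩ := mem_image.1 hyR
        exact hyr (congrArg r (Subtype.ext ((hgr c').symm.trans (mem_filter.1 hy).2)))
      rw [hoff y hyR, sub_self, zero_mul]
  have hcard := card_le_card_of_injOn restrict hmaps hinj
  rw [card_signs, Fintype.card_subtype_compl, Fintype.card_coe, hR] at hcard
  calc _ ≤ 2 ^ (Fintype.card X - #C) * 2 ^ #C := Nat.mul_le_mul_right _ hcard
    _ = 2 ^ Fintype.card X := by rw [← pow_add, Nat.sub_add_cancel (hR ▸ hRX)]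

theorem exists_mem_forall_notMem_of_card_lt {T Z : Type*} [Fintype T] [DecidableEq Z]
    {𝒵 : Finset Z} (h𝒵 : 𝒵.Nonempty) (bad : T → Finset Z) {N : ℕ}
    (hT : Fintype.card T < N) (hbad : ∀ t, #(bad t) * N ≤ #𝒵) :
    ∃ z ∈ 𝒵, ∀ t, z ∉ bad t := by
  by_contra! hcover
  have hsub : 𝒵 ⊆ univ.biUnion bad := fun z hz => by
    obtain ⟨t, ht⟩ := hcover z hz
    exact mem_biUnion.2 ⟨t, mem_univ t, ht⟩
  have hpos : 0 < #𝒵 := h𝒵.card_pos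
  have : N * #𝒵 < N * #𝒵 := calc
    N * #𝒵 ≤ N * ∑ t, #(bad t) :=
      Nat.mul_le_mul_left _ ((card_le_card hsub).trans card_biUnion_le)
    _ = ∑ t, #(bad t) * N := by rw [mul_sum]; simp only [Nat.mul_comm]
    _ ≤ ∑ _t : T, #𝒵 := sum_le_sum fun t _ => hbad t
    _ = Fintype.card T * #𝒵 := by rw [sum_const, card_univ, smul_eq_mul]
    _ < N * #𝒵 := Nat.mul_lt_mul_of_pos_right hT hpos
  exact lt_irrefl _ this

/-- Union bound over the pairs `(A, α)`: each one defeats at most a `2^{-binom(k,d)}` fraction of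
the sign patterns. -/
theorem exists_signs_forall_exists_sum_ne_zero {k : ℕ} (d : ℕ) (h : n * k + n < k.choose d) :
    ∃ z ∈ signs (F2 n), ∀ (A : Fin k → F2 n) (α : F2 n),
      k.choose d ≤ #(sphereClasses (perp (Submodule.span (ZMod 2) (Set.range A))) d) →
      ∃ c ∈ sphereClasses (perp (Submodule.span (ZMod 2) (Set.range A))) d,
        ∑ β ∈ weightSphere n d with (perp (Submodule.span (ZMod 2) (Set.range A))).mkQ β = c,
          z β * chi β α ≠ 0 := by
  let P : (Fin k → F2 n) → Submodule (ZMod 2) (F2 n) := fun A =>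
    perp (Submodule.span (ZMod 2) (Set.range A))
  let T := {A : Fin k → F2 n // k.choose d ≤ #(sphereClasses (P A) d)} × F2 n
  let bad : T → Finset (F2 n → ℝ) := fun t => {z ∈ signs (F2 n) |
    ∀ c ∈ sphereClasses (P t.1) d, ∑ β ∈ weightSphere n d with (P t.1).mkQ β = c,
      z β * chi β t.2 = 0}
  have hT : Fintype.card T < 2 ^ k.choose d := calc
    Fintype.card T ≤ Fintype.card ((Fin k → F2 n) × F2 n) :=
      Fintype.card_le_of_injective (Prod.map Subtype.val id)
        (Subtype.val_injective.prodMap Function.injective_id)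
    _ = 2 ^ (n * k + n) := by simp [Fintype.card_prod, ← pow_mul, pow_add]
    _ < 2 ^ k.choose d := Nat.pow_lt_pow_right (by norm_num) h
  have hbad : ∀ t, #(bad t) * 2 ^ k.choose d ≤ #(signs (F2 n)) := fun t => by
    have hcount := card_filter_fiber_sums_eq_zero_mul_le (P t.1).mkQ (weightSphere n d)
      (fun β => chi β t.2) (fun β => chi_ne_zero β t.2) (sphereClasses (P t.1) d)
      (erase_subset _ _)
    rw [card_signs]
    convert Nat.le_trans (Nat.mul_le_mul_left _ (Nat.pow_le_pow_right two_pos t.1.2)) hcount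
  obtain ⟨z, hz, hgood⟩ := exists_mem_forall_notMem_of_card_lt
    ⟨fun _ => 1, mem_signs.2 fun _ => Or.inl rfl⟩ bad hT hbad
  refine ⟨z, hz, fun A α hA => ?_⟩
  by_contra! hzero
  exact hgood ⟨⟨A, hA⟩, α⟩ (mem_filter.2 ⟨hz, hzero⟩)

end SignPatterns

lemma pow_le_pow_mul_choose {k d : ℕ} (h : d ≤ k) : k ^ d ≤ d ^ d * k.choose d := by
  have hfactors : k ^ d * d.descFactorial d ≤ d ^ d * k.descFactorial d := by
    have hpow : ∀ a : ℕ, a ^ d = ∏ _i ∈ range d, a := fun a => by simp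
    rw [Nat.descFactorial_eq_prod_range, Nat.descFactorial_eq_prod_range, hpow k, hpow d,
      ← prod_mul_distrib, ← prod_mul_distrib]
    refine prod_le_prod' fun i _ => ?_
    rw [Nat.mul_sub, Nat.mul_sub, Nat.mul_comm d k]
    exact Nat.sub_le_sub_left (Nat.mul_le_mul_right i h) _
  rw [Nat.descFactorial_self, Nat.descFactorial_eq_factorial_mul_choose, Nat.mul_comm,
    Nat.mul_left_comm] at hfactors
  exact Nat.le_of_mul_le_mul_left hfactors (Nat.factorial_pos d)

lemma add_one_le_two_pow_sub_one {d : ℕ} (hd : 3 ≤ d) : d + 1 ≤ 2 ^ (d - 1) := by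
  induction d, hd using Nat.le_induction with
  | base => norm_num
  | succ d hd ih =>
    rw [show d + 1 - 1 = d - 1 + 1 by omega, pow_succ]
    omega

lemma mul_add_lt_choose {n k d : ℕ} (hd : 3 ≤ d) (hn : 0 < n)
    (hk : (2 * d) ^ (d - 1) * n ≤ k ^ (d - 1)) : n * k + n < k.choose d := by
  obtain ⟨e, rfl⟩ : ∃ e, d = e + 1 := ⟨d - 1, by omega⟩
  rw [Nat.add_sub_cancel] at hk
  have h2e : e + 2 ≤ 2 ^ e := add_one_le_two_pow_sub_one hd
  have hk2 : 2 * (e + 1) ≤ k :=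
    (Nat.pow_le_pow_iff_left (by omega)).1 ((Nat.le_mul_of_pos_right _ hn).trans hk)
  refine Nat.lt_of_mul_lt_mul_left (a := (e + 1) ^ (e + 1)) ?_
  have hlin : (e + 1) * (n * (k + 1)) < (e + 2) * (n * k) := by nlinarith
  calc (e + 1) ^ (e + 1) * (n * k + n) = (e + 1) ^ e * ((e + 1) * (n * (k + 1))) := by ring
    _ < (e + 1) ^ e * ((e + 2) * (n * k)) := by gcongr
    _ ≤ (e + 1) ^ e * (2 ^ e * (n * k)) := by gcongr
    _ = (2 * (e + 1)) ^ e * n * k := by rw [mul_pow]; ring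
    _ ≤ k ^ e * k := by gcongr
    _ = k ^ (e + 1) := by ring
    _ ≤ (e + 1) ^ (e + 1) * k.choose (e + 1) := pow_le_pow_mul_choose (by omega)

lemma pow_mul_le_pow_of_mul_rpow_inv_le {a x y : ℝ} {e : ℕ} (he : e ≠ 0) (ha : 0 ≤ a)
    (hx : 0 ≤ x) (h : a * x ^ (e⁻¹ : ℝ) ≤ y) : a ^ e * x ≤ y ^ e := calc
  a ^ e * x = (a * x ^ (e⁻¹ : ℝ)) ^ e := by rw [mul_pow, Real.rpow_inv_natCast_pow hx he]
  _ ≤ y ^ e := pow_le_pow_left₀ (by positivity) h e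

lemma one_le_abs_sum_of_forall_eq_one_or {ι : Type*} {s : Finset ι} {t : ι → ℝ}
    (ht : ∀ i ∈ s, t i = 1 ∨ t i = -1) (h : ∑ i ∈ s, t i ≠ 0) : 1 ≤ |∑ i ∈ s, t i| := by
  obtain ⟨m, hm⟩ : ∃ m : ℤ, ∑ i ∈ s, t i = m := by
    refine sum_induction t (fun x => ∃ m : ℤ, x = m) ?_ ⟨0, by simp⟩ fun i hi => ?_
    · rintro _ _ ⟨p, rfl⟩ ⟨q, rfl⟩
      exact ⟨p + q, by push_cast; ring⟩
    · rcases ht i hi with h | h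
      · exact ⟨1, by simp [h]⟩
      · exact ⟨-1, by simp [h]⟩
  rw [hm] at h ⊢
  exact_mod_cast Int.one_le_abs (by exact_mod_cast h)

/-- random homogeneous degree-d bounded functions are far from regular
on every affine subspace of dimension at least 2d·n^{1/(d-1)}. -/
theorem degree_d_bounded_lower_bound (d : ℕ) (hd : 3 ≤ d) :
    ∃ n₀ : ℕ, ∀ n : ℕ, n₀ ≤ n →
      ∃ z : F2 n → ℝ, (∀ γ, hammingNorm γ = d → z γ = 1 ∨ z γ = -1) ∧
        ∀ (V : Submodule (ZMod 2) (F2 n)) (α : F2 n),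
          (2 * d : ℝ) * (n : ℝ) ^ ((1 : ℝ) / ((d : ℝ) - 1)) ≤
            (Module.finrank (ZMod 2) V : ℝ) →
          ∀ W : Submodule (ZMod 2) (F2 n), IsCompl W (perp V) →
            ∃ γ ∈ W, γ ≠ 0 ∧
              ((n.choose d : ℝ))⁻¹ ≤
                |restrictCoeff
                  (fun x => ((n.choose d : ℝ))⁻¹ *
                    ∑ γ' ∈ Finset.univ.filter (fun γ' : F2 n => hammingNorm γ' = d),
                      z γ' * chi γ' x) V α γ| := by
  refine ⟨1, fun n hn => ?_⟩
  set k := ⌈(2 * d : ℝ) * (n : ℝ) ^ ((1 : ℝ) / ((d : ℝ) - 1))⌉₊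
  have hk : (2 * d) ^ (d - 1) * n ≤ k ^ (d - 1) := by
    have hd1 : ((d - 1 : ℕ) : ℝ)⁻¹ = 1 / ((d : ℝ) - 1) := by
      rw [Nat.cast_sub (by omega), Nat.cast_one, one_div]
    exact_mod_cast pow_mul_le_pow_of_mul_rpow_inv_le (a := 2 * d) (x := n) (y := k)
      (e := d - 1) (by omega) (by positivity) n.cast_nonneg (by rw [hd1]; exact Nat.le_ceil _)
  obtain ⟨z, hz, hgood⟩ := exists_signs_forall_exists_sum_ne_zero d (mul_add_lt_choose hd hn hk)
  refine ⟨z, fun γ _ => mem_signs.1 hz γ, fun V α hdim W hW => ?_⟩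
  obtain ⟨A, hAV, hA⟩ :=
    exists_choose_le_card_sphereClasses V (d := d) (Nat.ceil_le.2 hdim) (by omega)
  obtain ⟨c', hc', hsum'⟩ := hgood A α hA
  obtain ⟨c, hc, hsum⟩ := exists_sum_fiber_ne_zero_of_le
    (perp_le_perp_span_of_subset (Set.range_subset_iff.2 hAV)) _ _ (mem_erase.1 hc').1 hsum'
  set w := Submodule.quotientEquivOfIsCompl (perp V) W hW.symm c
  have hw : (perp V).mkQ w = c := Submodule.mk_quotientEquivOfIsCompl_apply _ _
  refine ⟨w, w.2, fun h0 => hc ?_, ?_⟩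
  · rw [← hw, h0, map_zero]
  rw [restrictCoeff_mul_sum_chi, hw, abs_mul, abs_inv, Nat.abs_cast]
  refine le_mul_of_one_le_right (by positivity) (one_le_abs_sum_of_forall_eq_one_or ?_ hsum)
  intro β _
  rcases mem_signs.1 hz β with h | h <;> rcases chi_eq_one_or_eq_neg_one β α with h' | h' <;>
    simp [h, h']
end

section
/- There exist a constant c > 0 and an integer n₀ such that for every odd n ≥ n₀ and every affine subspace 𝒰 = α + 𝒱 of 𝔽₂ⁿ with codim(𝒱) ≤ √n/(10e) − 1, the restriction (MAJₙ)_𝒰 has a nonzero Fourier coefficient of magnitude at least c · n^{−1/2}. Consequently, for every δ ≤ c · n^{−1/2}, every affine subspace of 𝔽₂ⁿ on which MAJₙ is δ-regular has codimension greater than √n/(10e) − 1. -/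
open Finset

/-- The majority function on n (odd) bits, as a ±1-valued function:
+1 if fewer than n/2 coordinates equal 1, and −1 otherwise. -/
noncomputable def majF (n : ℕ) : F2 n → ℝ :=
  fun x => if 2 * (Finset.univ.filter (fun i => x i = 1)).card < n then 1 else -1

/-! For odd `n`, `MAJₙ(x) · Σᵢ (-1)^{xᵢ} = |Σᵢ (-1)^{xᵢ}|`, so the correlations `Aᵢ` of `MAJₙ` on
`𝒰` with the dictators `(-1)^{xᵢ}` add up to the mean of `|Σᵢ (-1)^{xᵢ}|` over `𝒰`. On an information
set of `𝒱` (`dim 𝒱` coordinates onto which `𝒱` projects bijectively) these signs are uniform and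
independent, so by a weak Khintchine inequality, `𝔼 |Σ εᵢ| ≥ √(N/3)` from the second and fourth
moments, that mean is `≳ √n` up to the `codim 𝒱 ≲ √n` remaining coordinates. Hence some coordinate
`i` of the information set has `|Aᵢ| ≳ n^{-1/2}`. The `𝒲`-component of the unit vector `eᵢ` is
nonzero and acts on `𝒱` as `xᵢ`, so its restricted Fourier coefficient is `±Aᵢ`. -/

section Sign

lemma ZMod.two_eq_zero_or_one (b : ZMod 2) : b = 0 ∨ b = 1 := by
  revert b; decide

noncomputable def signOf (b : ZMod 2) : ℝ := (-1) ^ b.val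

@[simp] lemma signOf_zero : signOf 0 = 1 := by simp [signOf]

@[simp] lemma signOf_one : signOf 1 = -1 := by simp [signOf, ZMod.val_one]

lemma signOf_add (a b : ZMod 2) : signOf (a + b) = signOf a * signOf b := by
  rcases a.two_eq_zero_or_one with rfl | rfl <;> rcases b.two_eq_zero_or_one with rfl | rfl <;>
    simp [show (1 : ZMod 2) + 1 = 0 from rfl]

lemma abs_signOf (b : ZMod 2) : |signOf b| = 1 := by
  simp [signOf]

lemma chi_eq_signOf {n : ℕ} (γ x : F2 n) : chi γ x = signOf (ip γ x) := rfl

lemma sum_zmod_two (g : ZMod 2 → ℝ) : ∑ b, g b = g 0 + g 1 := Fin.sum_univ_two g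

lemma abs_sum_signOf_le {ι : Type*} (s : Finset ι) (y : ι → ZMod 2) :
    |∑ i ∈ s, signOf (y i)| ≤ #s := by
  simpa [abs_signOf] using Finset.abs_sum_le_sum_abs (fun i => signOf (y i)) s

end Sign

section Rademacher

noncomputable def radSum {ι : Type*} [Fintype ι] (y : ι → ZMod 2) : ℝ := ∑ i, signOf (y i)

lemma radSum_eq_card_sub {ι : Type*} [Fintype ι] (y : ι → ZMod 2) :
    radSum y = Fintype.card ι - 2 * #{i | y i = 1} := by
  have h : ∀ i, signOf (y i) = 1 - 2 * (if y i = 1 then 1 else 0 : ℝ) := fun i => by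
    generalize y i = b
    rcases b.two_eq_zero_or_one with rfl | rfl <;> norm_num
  simp only [radSum, h, Finset.sum_sub_distrib, ← Finset.mul_sum, Finset.sum_boole,
    Finset.sum_const, Finset.card_univ, nsmul_eq_mul, mul_one]

lemma radSum_cons {N : ℕ} (b : ZMod 2) (y : Fin N → ZMod 2) :
    radSum (Fin.cons b y : Fin (N + 1) → ZMod 2) = signOf b + radSum y := by
  simp [radSum, Fin.sum_univ_succ]

lemma sum_pi_succ {N : ℕ} (F : (Fin (N + 1) → ZMod 2) → ℝ) :
    ∑ y, F y = ∑ y : Fin N → ZMod 2, (F (Fin.cons 0 y) + F (Fin.cons 1 y)) := by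
  rw [← (Fin.consEquiv fun _ => ZMod 2).sum_comp, Fintype.sum_prod_type_right]
  simp [sum_zmod_two, Fin.consEquiv]

lemma sum_radSum_sq (N : ℕ) : ∑ y : Fin N → ZMod 2, radSum y ^ 2 = N * 2 ^ N := by
  induction N with
  | zero => simp [radSum]
  | succ N ih =>
    simp only [sum_pi_succ, radSum_cons, signOf_zero, signOf_one]
    have h : ∀ y : Fin N → ZMod 2, (1 + radSum y) ^ 2 + (-1 + radSum y) ^ 2
        = 2 * radSum y ^ 2 + 2 := fun y => by ring
    simp only [h, Finset.sum_add_distrib, ← Finset.mul_sum, ih, Finset.sum_const,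
      Finset.card_univ, Fintype.card_pi, Fintype.card_fin, ZMod.card, Finset.prod_const,
      nsmul_eq_mul]
    push_cast
    ring

lemma sum_radSum_pow_four_le (N : ℕ) :
    ∑ y : Fin N → ZMod 2, radSum y ^ 4 ≤ 3 * N ^ 2 * 2 ^ N := by
  induction N with
  | zero => simp [radSum]
  | succ N ih =>
    simp only [sum_pi_succ, radSum_cons, signOf_zero, signOf_one]
    have h : ∀ y : Fin N → ZMod 2, (1 + radSum y) ^ 4 + (-1 + radSum y) ^ 4
        = 2 * radSum y ^ 4 + 12 * radSum y ^ 2 + 2 := fun y => by ring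
    simp only [h, Finset.sum_add_distrib, ← Finset.mul_sum, sum_radSum_sq]
    simp only [Finset.sum_const, Finset.card_univ, Fintype.card_pi, Fintype.card_fin,
      ZMod.card, Finset.prod_const, nsmul_eq_mul]
    push_cast
    rw [pow_succ (2 : ℝ)]
    nlinarith [ih, pow_pos (two_pos (α := ℝ)) N, Nat.cast_nonneg (α := ℝ) N]

lemma sum_sq_pow_three_le {ι : Type*} (s : Finset ι) (a : ι → ℝ) :
    (∑ i ∈ s, a i ^ 2) ^ 3 ≤ (∑ i ∈ s, |a i|) ^ 2 * ∑ i ∈ s, a i ^ 4 := by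
  have h₁ : (∑ i ∈ s, a i ^ 2) ^ 2 ≤ (∑ i ∈ s, |a i|) * ∑ i ∈ s, |a i| ^ 3 :=
    Finset.sum_sq_le_sum_mul_sum_of_sq_le_mul s (fun i _ => abs_nonneg _)
      (fun i _ => by positivity) fun i _ => le_of_eq (by rw [← sq_abs (a i)]; ring)
  have h₂ : (∑ i ∈ s, |a i| ^ 3) ^ 2 ≤ (∑ i ∈ s, a i ^ 2) * ∑ i ∈ s, a i ^ 4 :=
    Finset.sum_sq_le_sum_mul_sum_of_sq_le_mul s (fun i _ => by positivity)
      (fun i _ => by positivity) fun i _ =>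
        le_of_eq (by rw [show a i ^ 4 = (a i ^ 2) ^ 2 by ring, ← sq_abs (a i)]; ring)
  set A := ∑ i ∈ s, |a i|
  set B := ∑ i ∈ s, a i ^ 2
  set C := ∑ i ∈ s, |a i| ^ 3
  have hB : 0 ≤ B := Finset.sum_nonneg fun i _ => sq_nonneg _
  have h : B ^ 4 ≤ B * (A ^ 2 * ∑ i ∈ s, a i ^ 4) :=
    calc B ^ 4 = (B ^ 2) ^ 2 := by ring
      _ ≤ (A * C) ^ 2 := by gcongr
      _ = A ^ 2 * C ^ 2 := by ring
      _ ≤ A ^ 2 * (B * ∑ i ∈ s, a i ^ 4) := by gcongr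
      _ = B * (A ^ 2 * ∑ i ∈ s, a i ^ 4) := by ring
  rcases hB.eq_or_lt with hB0 | hBpos
  · rw [← hB0, zero_pow three_ne_zero]; positivity
  · nlinarith [pow_pos hBpos 3]

/-- A weak Khintchine inequality. -/
lemma sqrt_mul_le_sum_abs_radSum (N : ℕ) :
    2 ^ N * √(N / 3) ≤ ∑ y : Fin N → ZMod 2, |radSum y| := by
  set P := ∑ y : Fin N → ZMod 2, |radSum y|
  have hP : 0 ≤ P := Finset.sum_nonneg fun _ _ => abs_nonneg _
  have hinterp := sum_sq_pow_three_le Finset.univ (radSum (ι := Fin N))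
  rw [sum_radSum_sq] at hinterp
  have hfourth := mul_le_mul_of_nonneg_left (sum_radSum_pow_four_le N) (sq_nonneg P)
  have hN : N / 3 * (2 ^ N) ^ 2 ≤ P ^ 2 := by
    rcases N.eq_zero_or_pos with rfl | hN
    · simpa using sq_nonneg P
    have hpos : (0 : ℝ) < 3 * N ^ 2 * 2 ^ N := by positivity
    nlinarith
  calc 2 ^ N * √(N / 3) = √(N / 3 * (2 ^ N) ^ 2) := by
        rw [Real.sqrt_mul (by positivity), Real.sqrt_sq (by positivity), mul_comm]
    _ ≤ √(P ^ 2) := Real.sqrt_le_sqrt hN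
    _ = P := Real.sqrt_sq hP

end Rademacher

section InformationSet

open Module Submodule

theorem Submodule.exists_embedding_bijective_restrict {K ι : Type*} [Field K] [Fintype ι]
    (V : Submodule K (ι → K)) :
    ∃ a : Fin (finrank K V) ↪ ι, Function.Bijective fun (v : V) j => (v : ι → K) (a j) := by
  set φ : ι → Dual K V := fun i => (LinearMap.proj i).comp V.subtype
  obtain ⟨κ, a, ha, hsp, hli⟩ := exists_linearIndependent' K φ
  have : Fintype κ := @Fintype.ofFinite κ (Finite.of_injective a ha)
  let L : V →ₗ[K] κ → K := LinearMap.pi fun k => φ (a k)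
  have hL : Function.Injective L := by
    rw [← LinearMap.ker_eq_bot, Submodule.eq_bot_iff]
    intro v hv
    have hle : span K (Set.range φ) ≤ LinearMap.ker (Dual.eval K V v) := by
      rw [← hsp, span_le]
      rintro _ ⟨k, rfl⟩
      exact congrFun hv k
    ext i
    exact hle (subset_span ⟨i, rfl⟩)
  have hcard : Fintype.card κ = finrank K V := by
    refine le_antisymm ?_ (by simpa using LinearMap.finrank_le_finrank_of_injective hL)
    calc Fintype.card κ = finrank K (span K (Set.range (φ ∘ a))) := (finrank_span_eq_card hli).symm
      _ ≤ finrank K (Dual K V) := Submodule.finrank_le _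
      _ = finrank K V := Subspace.dual_finrank_eq
  have hLbij : Function.Bijective L :=
    ⟨hL, (LinearMap.injective_iff_surjective_of_finrank_eq_finrank (by simp [hcard])).1 hL⟩
  let e : Fin (finrank K V) ≃ κ := (Fintype.equivFinOfCardEq hcard).symm
  exact ⟨e.toEmbedding.trans ⟨a, ha⟩,
    (Equiv.arrowCongr e.symm (Equiv.refl K)).bijective.comp hLbij⟩

end InformationSet

section Restriction

variable {n : ℕ}

lemma ip_add_left (a b x : F2 n) : ip (a + b) x = ip a x + ip b x := by
  simp [ip, add_mul, Finset.sum_add_distrib]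

lemma ip_single_one (i : Fin n) (x : F2 n) : ip (Pi.single i 1) x = x i := by
  simp [ip, Pi.single_apply]

/-- The `W`-component of the unit vector `eᵢ` acts on `V` as the `i`-th coordinate. -/
lemma exists_mem_forall_ip_eq_apply {V W : Submodule (ZMod 2) (F2 n)} (hW : IsCompl W (perp V))
    (i : Fin n) : ∃ w ∈ W, ∀ x ∈ V, ip w x = x i := by
  obtain ⟨w, hw, p, hp, hwp⟩ := Submodule.mem_sup.1 (hW.sup_eq_top ▸ Submodule.mem_top :
    Pi.single i 1 ∈ W ⊔ perp V)
  refine ⟨w, hw, fun x hx => ?_⟩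
  rw [← ip_single_one i x, ← hwp, ip_add_left, hp x hx, add_zero]

lemma restrictCoeff_eq_sum (f : F2 n → ℝ) (V : Submodule (ZMod 2) (F2 n)) [Fintype V]
    (α γ : F2 n) :
    restrictCoeff f V α γ = (∑ x : V, f (x + α) * chi γ x) / Fintype.card V := by
  classical
  rw [restrictCoeff, Nat.card_eq_fintype_card, Finset.sum_indicator_eq_sum_filter]
  congr 1
  exact Finset.sum_subtype _ (fun x => by simp) (fun x => f (x + α) * chi γ x)

noncomputable def coordCorr (f : F2 n → ℝ) (V : Submodule (ZMod 2) (F2 n)) [Fintype V]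
    (α : F2 n) (i : Fin n) : ℝ :=
  ∑ x : V, f (x + α) * signOf ((x + α) i)

variable {V : Submodule (ZMod 2) (F2 n)} [Fintype V]

lemma abs_restrictCoeff_eq_abs_coordCorr (f : F2 n → ℝ) (α : F2 n) {w : F2 n} {i : Fin n}
    (hw : ∀ x ∈ V, ip w x = x i) :
    |restrictCoeff f V α w| = |coordCorr f V α i| / Fintype.card V := by
  have h : coordCorr f V α i = signOf (α i) * ∑ x : V, f (x + α) * chi w x := by
    rw [coordCorr, Finset.mul_sum]
    refine Finset.sum_congr rfl fun x _ => ?_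
    rw [chi_eq_signOf, hw x x.2, Pi.add_apply, signOf_add]
    ring
  rw [restrictCoeff_eq_sum, h, abs_div, abs_mul, abs_signOf, one_mul, Nat.abs_cast]

lemma abs_coordCorr_le {f : F2 n → ℝ} (hf : ∀ x, |f x| ≤ 1) (α : F2 n) (i : Fin n) :
    |coordCorr f V α i| ≤ Fintype.card V := by
  calc |coordCorr f V α i| ≤ ∑ x : V, |f (x + α) * signOf ((x + α) i)| :=
        Finset.abs_sum_le_sum_abs _ _
    _ ≤ ∑ _x : V, (1 : ℝ) := Finset.sum_le_sum fun x _ => by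
        rw [abs_mul, abs_signOf, mul_one]; exact hf _
    _ = Fintype.card V := by simp

end Restriction

section Majority

variable {n : ℕ}

lemma abs_majF (x : F2 n) : |majF n x| = 1 := by
  unfold majF; split_ifs <;> simp

/-- For odd `n` the majority vote is the sign of `Σᵢ (-1)^{xᵢ}`, which never vanishes. -/
lemma majF_mul_radSum (hn : Odd n) (x : F2 n) : majF n x * radSum x = |radSum x| := by
  rw [radSum_eq_card_sub, Fintype.card_fin, majF]
  split_ifs with h
  · rw [one_mul, abs_of_pos (by rw [sub_pos]; exact_mod_cast h)]
  · have h' : n < 2 * #{i | x i = 1} := by obtain ⟨k, rfl⟩ := hn; omega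
    rw [abs_of_neg (by rw [sub_neg]; exact_mod_cast h')]
    ring

lemma abs_radSum_comp_le {ι κ : Type*} [Fintype ι] [Fintype κ] (a : κ ↪ ι) (z : ι → ZMod 2) :
    |radSum (z ∘ a)| ≤ |radSum z| + (Fintype.card ι - Fintype.card κ : ℕ) := by
  classical
  have hsplit : radSum z = radSum (z ∘ a) + ∑ i ∈ (univ.map a)ᶜ, signOf (z i) := by
    rw [radSum, ← Finset.sum_add_sum_compl (univ.map a), Finset.sum_map]
    rfl
  have hcompl := abs_sum_signOf_le (univ.map a)ᶜ z
  rw [Finset.card_compl, Finset.card_map, Finset.card_univ] at hcompl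
  calc |radSum (z ∘ a)| = |radSum z - ∑ i ∈ (univ.map a)ᶜ, signOf (z i)| := by
        rw [hsplit, add_sub_cancel_right]
    _ ≤ |radSum z| + |∑ i ∈ (univ.map a)ᶜ, signOf (z i)| := abs_sub _ _
    _ ≤ _ := by gcongr

variable {V : Submodule (ZMod 2) (F2 n)} [Fintype V]

lemma sum_coordCorr_majF (hn : Odd n) (α : F2 n) :
    ∑ i, coordCorr (majF n) V α i = ∑ x : V, |radSum ((x : F2 n) + α)| := by
  simp only [coordCorr]
  rw [Finset.sum_comm]
  refine Finset.sum_congr rfl fun x _ => ?_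
  rw [← Finset.mul_sum, ← majF_mul_radSum hn]
  rfl

section OnInformationSet

variable {m : ℕ} {a : Fin m ↪ Fin n} (ha : Function.Bijective fun (v : V) j => (v : F2 n) (a j))
include ha

lemma sum_abs_radSum_ge (α : F2 n) :
    Fintype.card V * (√(m / 3) - (n - m : ℕ)) ≤ ∑ x : V, |radSum ((x : F2 n) + α)| := by
  have hcard : (Fintype.card V : ℝ) = 2 ^ m := by
    rw [Fintype.card_of_bijective ha]; simp
  have hshift : Function.Bijective fun x : V => (x + α : F2 n) ∘ a :=
    (Equiv.addRight (α ∘ a)).bijective.comp ha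
  have hsum : ∑ x : V, |radSum ((x + α : F2 n) ∘ a)| = ∑ y : Fin m → ZMod 2, |radSum y| :=
    Fintype.sum_bijective _ hshift _ _ fun _ => rfl
  have hpoint := fun x : V => abs_radSum_comp_le a (x + α : F2 n)
  simp only [Fintype.card_fin] at hpoint
  calc Fintype.card V * (√(m / 3) - (n - m : ℕ))
      ≤ ∑ x : V, |radSum ((x + α : F2 n) ∘ a)| - ∑ _x : V, ((n - m : ℕ) : ℝ) := by
        rw [hsum, Finset.sum_const, Finset.card_univ, nsmul_eq_mul, mul_sub, hcard]
        linarith [sqrt_mul_le_sum_abs_radSum m]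
    _ ≤ ∑ x : V, |radSum ((x : F2 n) + α)| := by
        rw [sub_le_iff_le_add, ← Finset.sum_add_distrib]
        exact Finset.sum_le_sum fun x _ => hpoint x

/-- Averaging over the information set: the coordinates outside it carry correlation at most
`|V|` each, so some coordinate inside carries a `1/m` share of the rest. -/
lemma exists_le_abs_coordCorr_majF (hn : Odd n) (hm : 0 < m) (α : F2 n) :
    ∃ i, (∃ x ∈ V, x i ≠ 0) ∧
      Fintype.card V * (√(m / 3) - 2 * (n - m : ℕ)) / m ≤ |coordCorr (majF n) V α i| := by
  classical
  set A := coordCorr (majF n) V α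
  set q : ℝ := (Fintype.card V : ℝ)
  have houtside : ∑ i ∈ (univ.map a)ᶜ, A i ≤ (n - m : ℕ) * q := by
    calc ∑ i ∈ (univ.map a)ᶜ, A i ≤ ∑ _i ∈ (univ.map a)ᶜ, q :=
          Finset.sum_le_sum fun i _ =>
            (le_abs_self _).trans (abs_coordCorr_le (fun x => (abs_majF x).le) α i)
      _ = (n - m : ℕ) * q := by simp [Finset.card_compl]
  have hinside : q * (√(m / 3) - 2 * (n - m : ℕ)) ≤ ∑ j, |A (a j)| := by
    have htotal := sum_abs_radSum_ge ha α
    rw [← sum_coordCorr_majF hn, ← Finset.sum_add_sum_compl (univ.map a), Finset.sum_map] at htotal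
    linarith [Finset.sum_le_sum fun j (_ : j ∈ univ) => le_abs_self (A (a j))]
  obtain ⟨j, -, hj⟩ := Finset.exists_le_of_sum_le (univ_nonempty_iff.2 ⟨⟨0, hm⟩⟩)
    (f := fun _ => q * (√(m / 3) - 2 * (n - m : ℕ)) / m) (hinside.trans_eq' (by
      rw [Finset.sum_const, Finset.card_univ, Fintype.card_fin, nsmul_eq_mul]
      field_simp))
  obtain ⟨v, hv⟩ := ha.2 (Pi.single j 1)
  have hvj : (v : F2 n) (a j) = 1 := by simpa using congrFun hv j
  exact ⟨a j, ⟨v, v.2, by rw [hvj]; decide⟩, hj⟩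

end OnInformationSet

end Majority

/-- `k ≤ √n/10` leaves `m = n - k ≥ 9n/10`, so `√(m/3) - 2k ≥ (9/20 - 2/10)√n = √n/4`. -/
lemma inv_sqrt_div_four_le {n m k : ℝ} (hn : 1 ≤ n) (hk₀ : 0 ≤ k) (hk : k ≤ √n / 10)
    (hmk : m + k = n) : (√n)⁻¹ / 4 ≤ (√(m / 3) - 2 * k) / m := by
  have hsqrt : √n ≤ n := (Real.sqrt_le_left (by linarith)).2 (by nlinarith)
  have hsq : √n ^ 2 = n := Real.sq_sqrt (by linarith)
  have hm : 9 / 10 * n ≤ m := by linarith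
  have hmpos : 0 < m := by linarith
  have hroot : 9 / 20 * √n ≤ √(m / 3) :=
    Real.le_sqrt_of_sq_le (by nlinarith)
  have hX : √n / 4 ≤ √(m / 3) - 2 * k := by linarith
  calc (√n)⁻¹ / 4 = √n / 4 / n := by field_simp; linarith
    _ ≤ (√(m / 3) - 2 * k) / n := by gcongr
    _ ≤ (√(m / 3) - 2 * k) / m :=
        div_le_div_of_nonneg_left (by linarith) hmpos (by linarith)

theorem exists_ne_zero_le_abs_restrictCoeff_majF {n : ℕ} (hn : Odd n)
    {V W : Submodule (ZMod 2) (F2 n)} (hW : IsCompl W (perp V)) (α : F2 n)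
    (hk : ((n - Module.finrank (ZMod 2) V : ℕ) : ℝ) ≤ √n / 10) :
    ∃ γ ∈ W, γ ≠ 0 ∧ (√n)⁻¹ / 4 ≤ |restrictCoeff (majF n) V α γ| := by
  classical
  set m := Module.finrank (ZMod 2) V
  obtain ⟨a, ha⟩ := V.exists_embedding_bijective_restrict
  have hmn : m ≤ n := (Submodule.finrank_le V).trans_eq (by simp)
  have hbound := inv_sqrt_div_four_le (by exact_mod_cast hn.pos) (Nat.cast_nonneg _) hk
    (m := m) (by push_cast [hmn]; ring)
  -- `m = 0` would make the right-hand side of `hbound` a division by zero, i.e. `0`.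
  have hm : 0 < m := by
    refine Nat.pos_of_ne_zero fun h => ?_
    rw [h, Nat.cast_zero, div_zero] at hbound
    have : 0 < (√n)⁻¹ / 4 := by have := hn.pos; positivity
    linarith
  obtain ⟨i, ⟨x, hxV, hxi⟩, hi⟩ := exists_le_abs_coordCorr_majF ha hn hm α
  obtain ⟨w, hwW, hw⟩ := exists_mem_forall_ip_eq_apply hW i
  refine ⟨w, hwW, ?_, ?_⟩
  · rintro rfl
    exact hxi (by simpa [ip] using (hw x hxV).symm)
  · have hV : (0 : ℝ) < Fintype.card V := by exact_mod_cast Fintype.card_pos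
    rw [abs_restrictCoeff_eq_abs_coordCorr _ _ hw, le_div_iff₀ hV]
    calc (√n)⁻¹ / 4 * Fintype.card V
        ≤ (√(m / 3) - 2 * (n - m : ℕ)) / m * Fintype.card V := by gcongr
      _ = Fintype.card V * (√(m / 3) - 2 * (n - m : ℕ)) / m := by ring
      _ ≤ _ := hi

/-- majority has a nontrivial restricted Fourier coefficient of magnitude
Ω(n^{-1/2}) on every affine subspace of codimension at most √n/(10e) − 1; consequently
any affine subspace on which MAJₙ is δ-regular (δ ≤ c·n^{-1/2}) has larger codimension. -/
theorem majority_lower_bound :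
    ∃ (c : ℝ) (n₀ : ℕ), 0 < c ∧
      ∀ n : ℕ, n₀ ≤ n → Odd n →
        (∀ (V : Submodule (ZMod 2) (F2 n)) (α : F2 n),
          ((n - Module.finrank (ZMod 2) V : ℕ) : ℝ) ≤
              Real.sqrt n / (10 * Real.exp 1) - 1 →
          ∀ W : Submodule (ZMod 2) (F2 n), IsCompl W (perp V) →
            ∃ γ ∈ W, γ ≠ 0 ∧
              c * (n : ℝ) ^ (-(1 : ℝ) / 2) ≤ |restrictCoeff (majF n) V α γ|) ∧
        ∀ δ : ℝ, δ ≤ c * (n : ℝ) ^ (-(1 : ℝ) / 2) →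
          ∀ (V : Submodule (ZMod 2) (F2 n)) (α : F2 n),
            IsDeltaRegular (majF n) V α δ →
            Real.sqrt n / (10 * Real.exp 1) - 1 <
              ((n - Module.finrank (ZMod 2) V : ℕ) : ℝ) := by
  refine ⟨1 / 8, 0, by norm_num, fun n _ hn => ?_⟩
  have hrpow : (n : ℝ) ^ (-(1 : ℝ) / 2) = (√n)⁻¹ := by
    rw [neg_div, Real.rpow_neg n.cast_nonneg, Real.sqrt_eq_rpow]
  have hpos : 0 < (√n)⁻¹ := by have := hn.pos; positivity
  have hcodim {V : Submodule (ZMod 2) (F2 n)}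
      (hV : ((n - Module.finrank (ZMod 2) V : ℕ) : ℝ) ≤ √n / (10 * Real.exp 1) - 1) :
      ((n - Module.finrank (ZMod 2) V : ℕ) : ℝ) ≤ √n / 10 := by
    have : √n / (10 * Real.exp 1) ≤ √n / 10 := div_le_div_of_nonneg_left (by positivity)
      (by norm_num) (by linarith [Real.add_one_le_exp 1])
    linarith
  rw [hrpow]
  refine ⟨fun V α hV W hW => ?_, fun δ hδ V α hreg => ?_⟩
  · obtain ⟨γ, hγW, hγ, hle⟩ := exists_ne_zero_le_abs_restrictCoeff_majF hn hW α (hcodim hV)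
    exact ⟨γ, hγW, hγ, by linarith⟩
  · by_contra! hV
    obtain ⟨W, hW⟩ := (perp V).exists_isCompl
    obtain ⟨γ, hγW, hγ, hle⟩ := exists_ne_zero_le_abs_restrictCoeff_majF hn hW.symm α (hcodim hV)
    linarith [hreg W hW.symm γ hγW hγ]
end

section
/- Let 𝒱 ⊆ 𝔽₂ⁿ be a linear subspace of codimension C and let 𝒲 be a linear subspace with 𝒲 ⊕ 𝒱^⊥ = 𝔽₂ⁿ. Then there exists a set S ⊆ 𝒲 with |S| ≥ n − C such that for every u ∈ S, the coset u + 𝒱^⊥ contains at least one standard basis vector e_i. Moreover, there exists a subset S₁ ⊆ S with |S₁| ≥ n − 2C such that for every u ∈ S₁, the coset u + 𝒱^⊥ contains exactly one standard basis vector. -/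
open Finset

/-!
Let `π` be the projection onto `𝒲` along `𝒱^⊥`. Over `𝔽₂`, for `u ∈ 𝒲` the coset `u + 𝒱^⊥`
contains `eᵢ` exactly when `u = π eᵢ`, so `S = {π e₁, …, π eₙ}` is the set of such `u`. It spans
`𝒲 = range π`, of dimension `n - C`, so `|S| ≥ n - C`. The `n` basis vectors are distributed among
the `|S|` cosets, each receiving at least one; if `S₁` collects those receiving exactly one, then
`n ≥ |S₁| + 2 (|S| - |S₁|)`, whence `|S₁| ≥ 2 |S| - n ≥ n - 2C`.
-/

open Module

theorem Finset.two_mul_card_image_le_card_add_card_filter_existsUnique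
    {ι β : Type*} [Fintype ι] [DecidableEq β] (f : ι → β)
    [DecidablePred fun w : β => ∃! i, f i = w] :
    2 * #(univ.image f) ≤ Fintype.card ι + #((univ.image f).filter fun w => ∃! i, f i = w) := by
  have fiber_pos : ∀ w ∈ univ.image f, 1 ≤ #{i | f i = w} := by
    intro w hw
    obtain ⟨i, -, rfl⟩ := mem_image.1 hw
    exact card_pos.2 ⟨i, by simp⟩
  have card_eq_sum_fiber : Fintype.card ι = ∑ w ∈ univ.image f, #{i | f i = w} := by
    simpa using card_eq_sum_card_image f univ
  have two_le : ∀ w ∈ univ.image f,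
      2 ≤ #{i | f i = w} + if ∃! i, f i = w then 1 else 0 := by
    intro w hw
    have := fiber_pos w hw
    by_cases h : ∃! i, f i = w
    · rw [if_pos h]
      omega
    · have : #{i | f i = w} ≠ 1 := by simpa [card_eq_one_iff_existsUnique] using h
      rw [if_neg h]
      omega
  calc 2 * #(univ.image f) = ∑ w ∈ univ.image f, 2 := by rw [sum_const, smul_eq_mul, mul_comm]
    _ ≤ ∑ w ∈ univ.image f, (#{i | f i = w} + if ∃! i, f i = w then 1 else 0) := sum_le_sum two_le
    _ = _ := by rw [sum_add_distrib, ← card_eq_sum_fiber, card_filter]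

theorem LinearMap.finrank_range_le_card_image {K M N ι : Type*} [DivisionRing K]
    [AddCommGroup M] [Module K M] [AddCommGroup N] [Module K N] [Fintype ι] [DecidableEq N]
    (f : M →ₗ[K] N) {v : ι → M} (hv : Submodule.span K (Set.range v) = ⊤) :
    finrank K (LinearMap.range f) ≤ #(univ.image (f ∘ v)) := by
  have : LinearMap.range f = Submodule.span K (univ.image (f ∘ v) : Set N) := by
    rw [← Submodule.map_top, ← hv, Submodule.map_span, coe_image, coe_univ, Set.image_univ,
      Set.range_comp]
  rw [this]
  exact finrank_span_finset_le_card _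

theorem Submodule.sub_mem_iff_projection_eq {R E : Type*} [Ring R] [AddCommGroup E] [Module R E]
    {p q : Submodule R E} (hpq : IsCompl p q) {x w : E} (hw : w ∈ p) :
    x - w ∈ q ↔ p.projection q hpq x = w := by
  rw [← projection_apply_eq_zero_iff hpq, map_sub, projection_apply_of_mem_left hpq hw,
    sub_eq_zero]

theorem perp_eq_comap_dualAnnihilator {n : ℕ} (V : Submodule (ZMod 2) (F2 n)) :
    perp V = V.dualAnnihilator.comap (dotProductEquiv (ZMod 2) (Fin n)).toLinearMap := by
  ext γ
  simp [perp, Submodule.mem_dualAnnihilator, ip, dotProduct]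

theorem finrank_perp {n : ℕ} (V : Submodule (ZMod 2) (F2 n)) :
    finrank (ZMod 2) (perp V) = n - finrank (ZMod 2) V := by
  have h := Subspace.finrank_add_finrank_dualAnnihilator_eq V
  rw [finrank_fin_fun] at h
  rw [perp_eq_comap_dualAnnihilator, Submodule.comap_equiv_eq_map_symm,
    LinearEquiv.finrank_map_eq]
  exact Nat.eq_sub_of_add_eq' h

/-- at least n − C cosets of 𝒱^⊥ meeting 𝒲 contain a standard basis
vector, and at least n − 2C of them contain exactly one. -/
theorem std_basis_vecs_in_cosets (n C : ℕ) (V : Submodule (ZMod 2) (F2 n))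
    (hC : n - Module.finrank (ZMod 2) V = C)
    (W : Submodule (ZMod 2) (F2 n)) (hW : IsCompl W (perp V)) :
    ∃ S : Finset (F2 n), ↑S ⊆ (W : Set (F2 n)) ∧ n - C ≤ S.card ∧
      (∀ u ∈ S, ∃ i : Fin n, Pi.single i (1 : ZMod 2) + u ∈ perp V) ∧
      ∃ S₁ ⊆ S, n - 2 * C ≤ S₁.card ∧
        ∀ u ∈ S₁, ∃! i : Fin n, Pi.single i (1 : ZMod 2) + u ∈ perp V := by
  classical
  set π := W.projection (perp V) hW
  set e : Fin n → F2 n := fun i => Pi.single i 1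
  have coset_iff : ∀ i, ∀ u ∈ W, e i + u ∈ perp V ↔ π (e i) = u := fun i u hu => by
    rw [← ZModModule.sub_eq_add, Submodule.sub_mem_iff_projection_eq hW hu]
  have finrank_W : finrank (ZMod 2) W = n - C := by
    have := Submodule.finrank_add_eq_of_isCompl hW
    rw [finrank_fin_fun, finrank_perp] at this
    omega
  have span_e : Submodule.span (ZMod 2) (Set.range e) = ⊤ := by
    rw [← (Pi.basisFun (ZMod 2) (Fin n)).span_eq]
    congr
    exact (funext (Pi.basisFun_apply (ZMod 2) (Fin n))).symm
  have card_S : n - C ≤ #(univ.image (π ∘ e)) := by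
    have := π.finrank_range_le_card_image span_e
    rwa [Submodule.range_projection, finrank_W] at this
  have S_sub_W : ∀ u ∈ univ.image (π ∘ e), u ∈ W := by
    simp only [mem_image, mem_univ, true_and]
    rintro u ⟨i, rfl⟩
    exact Submodule.projection_apply_mem hW _
  have card_S₁ := two_mul_card_image_le_card_add_card_filter_existsUnique (π ∘ e)
  rw [Fintype.card_fin] at card_S₁
  refine ⟨univ.image (π ∘ e), S_sub_W, card_S, ?_,
    (univ.image (π ∘ e)).filter fun u => ∃! i, (π ∘ e) i = u, filter_subset _ _, by omega, ?_⟩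
  · intro u hu
    obtain ⟨i, -, rfl⟩ := mem_image.1 hu
    exact ⟨i, (coset_iff i _ (S_sub_W _ hu)).2 rfl⟩
  · intro u hu
    obtain ⟨hu_S, huniq⟩ := mem_filter.1 hu
    have coset_iff_u := fun i => coset_iff i u (S_sub_W u hu_S)
    simpa only [Function.comp_apply, ← coset_iff_u] using huniq
end
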